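/- Let d be a positive square-free integer with d ≡ 2 or 3 (mod 4), d = n² + r with integers n > 0 and −n < r ≠ ±1 ≤ n, and let a₁ = 1/2 + ((2n²+r−1)/(4n(n²+r)))√d and a₂ = 1/2 − ((2n²+r−1)/(4n(n²+r)))√d in K = ℚ(√d). Then μ(a₁) = μ(a₂) and M(a₁) ∩ M(a₂) = {±1}; in particular a₁x² and a₂x² are neighbouring perfect forms. -/

import Mathlib

/-!
We model the real quadratic field `K = ℚ(√d)` concretely: an element
`a.1 + a.2·√d` is represented by its pair of rational coordinates
`a : ℚ × ℚ`, and the ring of integers `O_K = ℤ[√d]` (for `d ≡ 2, 3 mod 4`)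
by pairs of integers `x : ℤ × ℤ` representing `x.1 + x.2·√d`.
-/

noncomputable section

/-- An element `a.1 + a.2·√d` of `ℚ(√d)`, given by its rational coordinates. -/
abbrev QF := ℚ × ℚ

/-- The real embedding of `ℚ(√d)` sending `√d` to the positive square root. -/
def emb (d : ℤ) (a : QF) : ℝ := (a.1 : ℝ) + (a.2 : ℝ) * Real.sqrt (d : ℝ)

/-- Galois conjugation on `ℚ(√d)`. -/
def conj (a : QF) : QF := (a.1, -a.2)

/-- `a ∈ ℚ(√d)` is totally positive: both real embeddings are positive. -/
def TotPos (d : ℤ) (a : QF) : Prop := 0 < emb d a ∧ 0 < emb d (conj a)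

/-- Multiplication in `ℚ(√d)`, in coordinates. -/
def qmul (d : ℤ) (a b : QF) : QF :=
  (a.1 * b.1 + (d : ℚ) * a.2 * b.2, a.1 * b.2 + a.2 * b.1)

/-- The element of `ℚ(√d)` represented by `x = x.1 + x.2·√d ∈ ℤ[√d]`. -/
def ofInt (x : ℤ × ℤ) : QF := ((x.1 : ℚ), (x.2 : ℚ))

/-- `Tr_{K/ℚ}(a·x²)` for `a ∈ K = ℚ(√d)` and `x = x.1 + x.2·√d ∈ O_K = ℤ[√d]`. -/
def trForm (d : ℤ) (a : QF) (x : ℤ × ℤ) : ℚ :=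
  2 * (a.1 * ((x.1 : ℚ) ^ 2 + (d : ℚ) * (x.2 : ℚ) ^ 2)
    + 2 * (d : ℚ) * a.2 * (x.1 : ℚ) * (x.2 : ℚ))

/-- `μ` is the minimum `μ(a) = min_{x ∈ O_K, x ≠ 0} Tr(a x²)` of the unary form `a x²`. -/
def IsMinOf (d : ℤ) (a : QF) (μ : ℚ) : Prop :=
  (∃ x : ℤ × ℤ, x ≠ 0 ∧ trForm d a x = μ) ∧ ∀ x : ℤ × ℤ, x ≠ 0 → μ ≤ trForm d a x

/-- The set `M(a) = {x ∈ O_K : Tr(a x²) = μ}` of minimal vectors of `a x²`,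
given its minimum `μ = μ(a)`. -/
def MinVecs (d : ℤ) (a : QF) (μ : ℚ) : Set (ℤ × ℤ) :=
  {x : ℤ × ℤ | trForm d a x = μ}

/-- The unary form `a x²` is perfect: `a` is totally positive and is the unique
totally positive element whose minimum equals `μ(a)` and whose set of minimal
vectors contains `M(a)`. -/
def IsPerfect (d : ℤ) (a : QF) : Prop :=
  TotPos d a ∧ ∃ μ : ℚ, IsMinOf d a μ ∧
    ∀ b : QF, TotPos d b → IsMinOf d b μ → MinVecs d a μ ⊆ MinVecs d b μ → b = a

/-- `u = u.1 + u.2·√d` is a unit of `ℤ[√d]` (norm `±1`). -/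
def IsUnitPair (d : ℤ) (u : ℤ × ℤ) : Prop :=
  u.1 ^ 2 - d * u.2 ^ 2 = 1 ∨ u.1 ^ 2 - d * u.2 ^ 2 = -1

/-- `α + β·√d` (with `α, β > 0`) is the fundamental unit of `ℚ(√d)`:
it is a unit, and it is the smallest unit greater than `1`. -/
def IsFundUnit (d α β : ℤ) : Prop :=
  0 < α ∧ 0 < β ∧ IsUnitPair d (α, β) ∧
    ∀ u : ℤ × ℤ, IsUnitPair d u →
      1 < (u.1 : ℝ) + (u.2 : ℝ) * Real.sqrt (d : ℝ) →
      (α : ℝ) + (β : ℝ) * Real.sqrt (d : ℝ) ≤ (u.1 : ℝ) + (u.2 : ℝ) * Real.sqrt (d : ℝ)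

/-- The unary forms `a x²` and `b x²` lie in the same class up to homothety and
`GL₁(O_K)`-equivalence: `a = λ · b · u²` for some positive rational `λ` and unit `u`. -/
def SameClass (d : ℤ) (a b : QF) : Prop :=
  ∃ lam : ℚ, 0 < lam ∧ ∃ u : ℤ × ℤ, IsUnitPair d u ∧
    a = lam • qmul d b (qmul d (ofInt u) (ofInt u))

/-!
After the substitution `t = x + n·y`, `n · Tr(a₁ (x + y√d)²)` becomes the reduced binary form
`n t² + (r - 1) t y + n y²`, whose minimum over `ℤ² \ 0` is its leading coefficient `n`. Hence
`μ(a₁) = 1`, attained at `±1` and at `±(n - √d)`; conjugation gives the same for `a₂` with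
`±(n + √d)`. The minimal vectors `1` and `n ∓ √d` impose two independent linear conditions on any
`b` with `M(aᵢ) ⊆ M(b)`, so both forms are perfect. A common minimal vector satisfies `x² + d y² = 1` and `xy = 0`, so it is `±1`.
-/

theorem le_binaryForm_of_reduced {a b c x y : ℤ} (hb : |b| ≤ a) (hac : a ≤ c)
    (hxy : (x, y) ≠ 0) : a ≤ a * x ^ 2 + b * x * y + c * y ^ 2 := by
  have ha : 0 ≤ a := (abs_nonneg b).trans hb
  have hbxy : -(a * (|x| * |y|)) ≤ b * x * y := by
    have : |b * x * y| ≤ a * (|x| * |y|) := by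
      rw [abs_mul, abs_mul, mul_assoc]
      exact mul_le_mul_of_nonneg_right hb (by positivity)
    linarith [neg_abs_le (b * x * y)]
  have hx2 : x ^ 2 = |x| ^ 2 := (sq_abs x).symm
  have hy2 : y ^ 2 = |y| ^ 2 := (sq_abs y).symm
  rcases eq_or_ne y 0 with rfl | hy
  · have hx : x ≠ 0 := fun hx => hxy (by simp [hx])
    have : 1 ≤ x ^ 2 := by nlinarith [Int.one_le_abs hx]
    nlinarith
  rcases eq_or_ne x 0 with rfl | hx
  · have : 1 ≤ y ^ 2 := by nlinarith [Int.one_le_abs hy]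
    nlinarith
  have h1x : 1 ≤ |x| := Int.one_le_abs hx
  have h1y : 1 ≤ |y| := Int.one_le_abs hy
  nlinarith [sq_nonneg (|x| - |y|), mul_le_mul h1x h1y zero_le_one (abs_nonneg x)]

section QuadraticField

variable {d : ℤ}

@[simp]
theorem conj_conj (a : QF) : conj (conj a) = a := by
  simp [conj]

theorem trForm_conj (a : QF) (x y : ℤ) : trForm d (conj a) (x, y) = trForm d a (x, -y) := by
  simp only [trForm, conj]
  push_cast
  ring

theorem trForm_one_zero (a : QF) : trForm d a (1, 0) = 2 * a.1 := by
  simp [trForm]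

theorem one_zero_mem_minVecs_half (c : ℚ) : (1, 0) ∈ MinVecs d (1 / 2, c) 1 := by
  simp [MinVecs, trForm_one_zero]

theorem mem_minVecs_conj {a : QF} {μ : ℚ} {x y : ℤ} :
    (x, y) ∈ MinVecs d (conj a) μ ↔ (x, -y) ∈ MinVecs d a μ := by
  simp only [MinVecs, Set.mem_ofPred_eq, trForm_conj]

theorem trForm_half (c : ℚ) (x y : ℤ) :
    trForm d (1 / 2, c) (x, y) = x ^ 2 + d * y ^ 2 + 4 * d * c * x * y := by
  simp only [trForm]
  ring

theorem ne_conj {a : QF} (ha : a.2 ≠ 0) : a ≠ conj a := fun h =>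
  ha (by linarith [congrArg Prod.snd h, show (conj a).2 = -a.2 from rfl])

theorem TotPos.conj {a : QF} (ha : TotPos d a) : TotPos d (conj a) :=
  ⟨ha.2, by simpa using ha.1⟩

theorem totPos_half {c : ℚ} (hd : 0 ≤ d) (hc : c ^ 2 * d < 1 / 4) : TotPos d (1 / 2, c) := by
  have hcR : ((c : ℝ) * Real.sqrt d) ^ 2 < (1 / 2) ^ 2 := by
    rw [mul_pow, Real.sq_sqrt (by exact_mod_cast hd)]
    have := (Rat.cast_lt (K := ℝ)).mpr hc
    push_cast at this
    linarith
  have := abs_lt.mp (abs_lt_of_sq_lt_sq hcR (by norm_num))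
  constructor <;> simp only [emb, conj] <;> push_cast <;> linarith

theorem IsMinOf.unique {a : QF} {μ μ' : ℚ} (h : IsMinOf d a μ) (h' : IsMinOf d a μ') :
    μ = μ' := by
  obtain ⟨⟨x, hx, rfl⟩, hmin⟩ := h
  obtain ⟨⟨y, hy, rfl⟩, hmin'⟩ := h'
  exact le_antisymm (hmin y hy) (hmin' x hx)

theorem IsMinOf.conj {a : QF} {μ : ℚ} (h : IsMinOf d a μ) : IsMinOf d (conj a) μ := by
  obtain ⟨⟨⟨x, y⟩, hxy, hμ⟩, hmin⟩ := h
  refine ⟨⟨(x, -y), ?_, by rw [trForm_conj, neg_neg, hμ]⟩, fun ⟨x', y'⟩ hxy' => ?_⟩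
  · simpa [Prod.ext_iff] using hxy
  · rw [trForm_conj]
    exact hmin _ (by simpa [Prod.ext_iff] using hxy')

theorem eq_of_trForm_eq {a b : QF} {x y : ℤ} (hd : d ≠ 0) (hxy : x * y ≠ 0)
    (h₁ : trForm d a (1, 0) = trForm d b (1, 0)) (h₂ : trForm d a (x, y) = trForm d b (x, y)) :
    a = b := by
  rw [trForm_one_zero, trForm_one_zero] at h₁
  have hfst : a.1 = b.1 := by linarith
  have hne : (4 * d * x * y : ℚ) ≠ 0 := by
    have hxyQ : (x * y : ℚ) ≠ 0 := by exact_mod_cast hxy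
    have hdQ : (d : ℚ) ≠ 0 := by exact_mod_cast hd
    simpa only [mul_assoc] using mul_ne_zero (mul_ne_zero four_ne_zero hdQ) hxyQ
  have hsnd : a.2 * (4 * d * x * y) = b.2 * (4 * d * x * y) := by
    simp only [trForm, hfst] at h₂
    linear_combination h₂
  exact Prod.ext hfst (mul_right_cancel₀ hne hsnd)

theorem isPerfect_of_mem_minVecs {a : QF} {μ : ℚ} {x y : ℤ} (hd : d ≠ 0) (hxy : x * y ≠ 0)
    (ha : TotPos d a) (hμ : IsMinOf d a μ) (h₁ : (1, 0) ∈ MinVecs d a μ)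
    (h₂ : (x, y) ∈ MinVecs d a μ) : IsPerfect d a :=
  ⟨ha, μ, hμ, fun _ _ _ hsub =>
    (eq_of_trForm_eq hd hxy (h₁.trans (hsub h₁).symm) (h₂.trans (hsub h₂).symm)).symm⟩

theorem minVecs_half_inter_conj {c : ℚ} (hd : 1 < d) (hc : c ≠ 0) :
    MinVecs d (1 / 2, c) 1 ∩ MinVecs d (1 / 2, -c) 1 = {(1, 0), (-1, 0)} := by
  ext ⟨x, y⟩
  simp only [Set.mem_inter_iff, MinVecs, Set.mem_ofPred_eq, trForm_half, Set.mem_insert_iff,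
    Set.mem_singleton_iff, Prod.mk.injEq]
  constructor
  · rintro ⟨h₁, h₂⟩
    have hdQ : (d : ℚ) ≠ 0 := by positivity
    have hxy : x * y = 0 := by
      have : (8 * d * c : ℚ) * (x * y) = 0 := by linear_combination h₁ - h₂
      exact_mod_cast (mul_eq_zero.mp this).resolve_left (by positivity)
    have hnorm : x ^ 2 + d * y ^ 2 = 1 := by exact_mod_cast (by linear_combination (h₁ + h₂) / 2 :
      (x : ℚ) ^ 2 + d * y ^ 2 = 1)
    have hy : y = 0 := by
      rcases mul_eq_zero.mp hxy with rfl | hy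
      · nlinarith [Int.one_le_abs (show y ≠ 0 by rintro rfl; simp at hnorm), sq_abs y]
      · exact hy
    subst hy
    have : (x - 1) * (x + 1) = 0 := by linear_combination hnorm
    rcases mul_eq_zero.mp this with h | h
    · exact Or.inl ⟨by linarith, rfl⟩
    · exact Or.inr ⟨by linarith, rfl⟩
  · rintro (⟨rfl, rfl⟩ | ⟨rfl, rfl⟩) <;> norm_num

end QuadraticField

section Neighbours

variable {n r : ℤ}

def neighbourCoeff (n r : ℤ) : ℚ :=
  (2 * (n : ℚ) ^ 2 + (r : ℚ) - 1) / (4 * (n : ℚ) * ((n : ℚ) ^ 2 + (r : ℚ)))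

theorem neighbourCoeff_pos (hn : 0 < n) (hr : -n < r) : 0 < neighbourCoeff n r := by
  have hnum : 0 < 2 * n ^ 2 + r - 1 := by nlinarith
  have hden : 0 < n ^ 2 + r := by nlinarith
  unfold neighbourCoeff
  have : (0 : ℚ) < 2 * n ^ 2 + r - 1 := by exact_mod_cast hnum
  have : (0 : ℚ) < n ^ 2 + r := by exact_mod_cast hden
  positivity

theorem neighbourCoeff_sq_mul_lt (hn : 0 < n) (hr₁ : -n < r) (hr₂ : r ≤ n) :
    neighbourCoeff n r ^ 2 * (n ^ 2 + r : ℤ) < 1 / 4 := by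
  have hden : (0 : ℚ) < n ^ 2 + r := by exact_mod_cast (show 0 < n ^ 2 + r by nlinarith)
  have hnQ : (0 : ℚ) < n := by exact_mod_cast hn
  have hr : ((r : ℚ) - 1) ^ 2 < 4 * n ^ 2 := by
    have : (r - 1) ^ 2 < 4 * n ^ 2 := by
      nlinarith [mul_nonneg (show 0 ≤ n - (r - 1) by omega) (show 0 ≤ n + (r - 1) by omega)]
    exact_mod_cast this
  unfold neighbourCoeff
  push_cast
  rw [div_pow, div_mul_eq_mul_div, div_lt_div_iff₀ (by positivity) (by norm_num)]
  nlinarith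

theorem mul_trForm_neighbourCoeff (hn : n ≠ 0) (hd : n ^ 2 + r ≠ 0) (x y : ℤ) :
    n * trForm (n ^ 2 + r) (1 / 2, neighbourCoeff n r) (x, y)
      = ((n * (x + n * y) ^ 2 + (r - 1) * (x + n * y) * y + n * y ^ 2 : ℤ) : ℚ) := by
  have hnQ : (n : ℚ) ≠ 0 := by exact_mod_cast hn
  have hdQ : (n : ℚ) ^ 2 + r ≠ 0 := by exact_mod_cast hd
  rw [trForm_half, neighbourCoeff]
  push_cast
  field_simp
  ring

theorem mem_minVecs_neighbourCoeff (hn : 0 < n) (hr : -n < r) :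
    (n, -1) ∈ MinVecs (n ^ 2 + r) (1 / 2, neighbourCoeff n r) 1 := by
  have h := mul_trForm_neighbourCoeff hn.ne' (by nlinarith) n (-1)
  refine mul_left_cancel₀ (show (n : ℚ) ≠ 0 by exact_mod_cast hn.ne') (h.trans ?_)
  push_cast
  ring

theorem isMinOf_neighbourCoeff (hn : 0 < n) (hr₁ : -n < r) (hr₂ : r ≤ n) :
    IsMinOf (n ^ 2 + r) (1 / 2, neighbourCoeff n r) 1 := by
  refine ⟨⟨(1, 0), by simp, one_zero_mem_minVecs_half _⟩, fun ⟨x, y⟩ hxy => ?_⟩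
  have hred := le_binaryForm_of_reduced (a := n) (b := r - 1) (c := n) (x := x + n * y) (y := y)
    (abs_le.mpr ⟨by omega, by omega⟩) le_rfl (by
      rw [Ne, Prod.mk_eq_zero] at hxy ⊢
      rintro ⟨h, rfl⟩
      exact hxy ⟨by simpa using h, rfl⟩)
  have h : (n : ℚ) * 1 ≤ n * trForm (n ^ 2 + r) (1 / 2, neighbourCoeff n r) (x, y) := by
    rw [mul_one, mul_trForm_neighbourCoeff hn.ne' (by nlinarith)]
    exact_mod_cast hred
  exact le_of_mul_le_mul_left h (by exact_mod_cast hn)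

end Neighbours

theorem statement16_general (d n r : ℤ) (hd : d = n ^ 2 + r) (hdpos : 0 < d)
    (hmod : d % 4 = 2 ∨ d % 4 = 3) (hn : 0 < n) (hr1 : -n < r) (hr2 : r ≤ n) :
    let a₁ : QF := (1 / 2, (2 * (n : ℚ) ^ 2 + (r : ℚ) - 1) / (4 * (n : ℚ) * ((n : ℚ) ^ 2 + (r : ℚ))))
    let a₂ : QF := (1 / 2, -((2 * (n : ℚ) ^ 2 + (r : ℚ) - 1) / (4 * (n : ℚ) * ((n : ℚ) ^ 2 + (r : ℚ)))))
    a₁ ≠ a₂ ∧ IsPerfect d a₁ ∧ IsPerfect d a₂ ∧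
      ∀ μ₁ μ₂ : ℚ, IsMinOf d a₁ μ₁ → IsMinOf d a₂ μ₂ →
        μ₁ = μ₂ ∧
          MinVecs d a₁ μ₁ ∩ MinVecs d a₂ μ₂ = ({(1, 0), (-1, 0)} : Set (ℤ × ℤ)) := by
  intro a₁ a₂
  have hd1 : 1 < d := by omega
  subst hd
  have hc : 0 < a₁.2 := neighbourCoeff_pos hn hr1
  have hmin₁ : IsMinOf (n ^ 2 + r) a₁ 1 := isMinOf_neighbourCoeff hn hr1 hr2
  have hmin₂ : IsMinOf (n ^ 2 + r) a₂ 1 := hmin₁.conj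
  have hvec₁ : (n, -1) ∈ MinVecs (n ^ 2 + r) a₁ 1 := mem_minVecs_neighbourCoeff hn hr1
  have hvec₂ : (n, 1) ∈ MinVecs (n ^ 2 + r) a₂ 1 := mem_minVecs_conj.mpr hvec₁
  have hpos₁ : TotPos (n ^ 2 + r) a₁ := totPos_half hdpos.le (neighbourCoeff_sq_mul_lt hn hr1 hr2)
  refine ⟨ne_conj hc.ne',
    isPerfect_of_mem_minVecs hdpos.ne' (by simpa using hn.ne') hpos₁ hmin₁
      (one_zero_mem_minVecs_half _) hvec₁,
    isPerfect_of_mem_minVecs hdpos.ne' (by simpa using hn.ne') hpos₁.conj hmin₂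
      (one_zero_mem_minVecs_half _) hvec₂,
    fun μ₁ μ₂ h₁ h₂ => ?_⟩
  obtain rfl := h₁.unique hmin₁
  obtain rfl := h₂.unique hmin₂
  exact ⟨rfl, minVecs_half_inter_conj hd1 hc.ne'⟩

/-- `μ(a₁) = μ(a₂)` and `M(a₁) ∩ M(a₂) = {±1}`; in particular
`a₁ x²` and `a₂ x²` are distinct perfect forms that are neighbours. -/
theorem statement16 (d n r : ℤ) (hd : d = n ^ 2 + r) (hdpos : 0 < d) (hsf : Squarefree d)
    (hmod : d % 4 = 2 ∨ d % 4 = 3) (hn : 0 < n) (hr1 : -n < r) (hr2 : r ≤ n)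
    (hrne1 : r ≠ 1) (hrnem1 : r ≠ -1) :
    let a₁ : QF := (1 / 2, (2 * (n : ℚ) ^ 2 + (r : ℚ) - 1) / (4 * (n : ℚ) * ((n : ℚ) ^ 2 + (r : ℚ))))
    let a₂ : QF := (1 / 2, -((2 * (n : ℚ) ^ 2 + (r : ℚ) - 1) / (4 * (n : ℚ) * ((n : ℚ) ^ 2 + (r : ℚ)))))
    a₁ ≠ a₂ ∧ IsPerfect d a₁ ∧ IsPerfect d a₂ ∧
      ∀ μ₁ μ₂ : ℚ, IsMinOf d a₁ μ₁ → IsMinOf d a₂ μ₂ →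
        μ₁ = μ₂ ∧
          MinVecs d a₁ μ₁ ∩ MinVecs d a₂ μ₂ = ({(1, 0), (-1, 0)} : Set (ℤ × ℤ)) :=
  statement16_general d n r hd hdpos hmod hn hr1 hr2
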